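/- arXiv:1001.1268 — 2 statements merged into one kernel-verified Lean document; each statement's English description precedes it below -/
import Mathlib

section
/- Given ε > 0 and a positive integer n, there exists δ > 0 with the following property: if A is a C*-algebra, B ⊆ A a C*-subalgebra, p₁,…,pₙ mutually orthogonal projections in A with p₁,…,p_k ∈ B (0 ≤ k ≤ n), and a_{k+1},…,aₙ are self-adjoint elements of B with ‖p_i − a_i‖ < min(1/2, δ) for k+1 ≤ i ≤ n, then there exist mutually orthogonal projections q₁,…,qₙ in B with q_i = p_i for 1 ≤ i ≤ k and ‖q_i − p_i‖ < ε for k+1 ≤ i ≤ n. -/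
section helpers
variable {A : Type} [CStarAlgebra A]

lemma proj_norm_le_one {e : A} (he : IsSelfAdjoint e) (h2 : e * e = e) : ‖e‖ ≤ 1 := by
  have h := CStarRing.norm_star_mul_self (x := e)
  rw [he.star_eq, h2] at h
  nlinarith [norm_nonneg e]

/-- The two-sided annihilator of a self-adjoint element, as a non-unital star subalgebra. -/
def ann (y : A) (hy : IsSelfAdjoint y) : NonUnitalStarSubalgebra ℂ A where
  carrier := {x | x * y = 0 ∧ y * x = 0}
  add_mem' {u v} hu hv := by
    refine ⟨?_, ?_⟩ <;> simp [add_mul, mul_add, hu.1, hu.2, hv.1, hv.2]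
  mul_mem' {u v} hu hv := by
    exact ⟨by rw [mul_assoc, hv.1, mul_zero], by rw [← mul_assoc, hu.2, zero_mul]⟩
  zero_mem' := by simp
  smul_mem' c x hx := ⟨by rw [smul_mul_assoc, hx.1, smul_zero], by rw [mul_smul_comm, hx.2, smul_zero]⟩
  star_mem' {x} hx := by
    constructor
    · rw [← hy.star_eq, ← star_mul]
      simpa using congrArg star hx.2
    · rw [← hy.star_eq, ← star_mul]
      simpa using congrArg star hx.1

lemma ann_isClosed (y : A) (hy : IsSelfAdjoint y) : IsClosed ((ann y hy : Set A)) := by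
  have h1 : IsClosed {x : A | x * y = 0} :=
    isClosed_singleton.preimage (continuous_id.mul continuous_const)
  have h2 : IsClosed {x : A | y * x = 0} :=
    isClosed_singleton.preimage (continuous_const.mul continuous_id)
  exact h1.inter h2

lemma mem_ann_iff (y : A) (hy : IsSelfAdjoint y) (x : A) :
    x ∈ ann y hy ↔ x * y = 0 ∧ y * x = 0 := Iff.rfl

end helpers

open NonUnitalStarAlgebra in
/-- A `ℂ`-non-unital star subalgebra, viewed as an `ℝ`-one. -/
def toReal {A : Type} [CStarAlgebra A] (S : NonUnitalStarSubalgebra ℂ A) :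
    NonUnitalStarSubalgebra ℝ A where
  carrier := S
  add_mem' := S.add_mem'
  mul_mem' := S.mul_mem'
  zero_mem' := S.zero_mem'
  smul_mem' r x hx := by
    rw [← algebraMap_smul ℂ r x]
    exact S.smul_mem' _ hx
  star_mem' := S.star_mem'

lemma mem_toReal {A : Type} [CStarAlgebra A] (S : NonUnitalStarSubalgebra ℂ A) (x : A) :
    x ∈ toReal S ↔ x ∈ S := Iff.rfl

open scoped ContinuousMapZero in
lemma cfcn_mem {A : Type} [CStarAlgebra A] {b : A} (hb : IsSelfAdjoint b)
    (S : NonUnitalStarSubalgebra ℂ A) (hS : IsClosed (S : Set A)) (hbS : b ∈ S)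
    (f : ℝ → ℝ) (hf : ContinuousOn f (quasispectrum ℝ b)) (hf0 : f 0 = 0) :
    cfcₙ f b ∈ S := by
  rw [cfcₙ_apply f b hf hf0 hb]
  have hdense := ContinuousMapZero.adjoin_id_dense (quasispectrum ℝ b)
  have key : ∀ g : ContinuousMapZero (quasispectrum ℝ b) ℝ, cfcₙHom hb (R := ℝ) g ∈ S := by
    intro g
    have h₁ := (cfcₙHom_isClosedEmbedding hb (R := ℝ)).continuous.range_subset_closure_image_dense
      hdense (Set.mem_range_self g)
    refine closure_minimal ?_ hS h₁
    rintro x ⟨g, hg, rfl⟩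
    suffices h : NonUnitalStarAlgebra.adjoin ℝ
        {(ContinuousMapZero.id (quasispectrum ℝ b) : ContinuousMapZero (quasispectrum ℝ b) ℝ)}
        ≤ (toReal S).comap (cfcₙHom hb (R := ℝ)) from h hg
    apply NonUnitalStarAlgebra.adjoin_le
    rw [Set.singleton_subset_iff]
    show cfcₙHom hb (ContinuousMapZero.id (quasispectrum ℝ b)) ∈ S
    have : (ContinuousMapZero.id (quasispectrum ℝ b) : ContinuousMapZero (quasispectrum ℝ b) ℝ)
        = ⟨(ContinuousMap.id ℝ).restrict <| quasispectrum ℝ b, rfl⟩ := rfl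
    rw [cfcₙHom_id hb]
    exact hbS
  exact key _

lemma step_lemma {A : Type} [CStarAlgebra A] {b p : A} (hb : IsSelfAdjoint b)
    (hp : IsSelfAdjoint p) (hp2 : p * p = p) (hsmall : ‖b - p‖ < 1/16) :
    ∃ q : A, IsSelfAdjoint q ∧ q * q = q ∧ ‖q - b‖ ≤ 8 * ‖b - p‖ ∧
      ∀ S : NonUnitalStarSubalgebra ℂ A, IsClosed (S : Set A) → b ∈ S → q ∈ S := by
  set r := ‖b - p‖ with hr
  have hr0 : 0 ≤ r := norm_nonneg _
  have hpn : ‖p‖ ≤ 1 := proj_norm_le_one hp hp2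
  have hbn : ‖b‖ ≤ 1 + r := by
    calc ‖b‖ = ‖p + (b - p)‖ := by rw [add_sub_cancel]
    _ ≤ ‖p‖ + ‖b - p‖ := norm_add_le _ _
    _ ≤ 1 + r := by rw [← hr]; linarith
  have hc : ‖b * b - b‖ ≤ 4 * r := by
    have h1 : b * b - b = b * (b - p) + (b - p) * p + (p - b) + (p * p - p) := by noncomm_ring
    rw [hp2, sub_self, add_zero] at h1
    calc ‖b * b - b‖ = ‖b * (b - p) + (b - p) * p + (p - b)‖ := by rw [h1]
    _ ≤ ‖b * (b - p) + (b - p) * p‖ + ‖p - b‖ := norm_add_le _ _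
    _ ≤ ‖b * (b - p)‖ + ‖(b - p) * p‖ + ‖p - b‖ := by
        gcongr; exact norm_add_le _ _
    _ ≤ ‖b‖ * ‖b - p‖ + ‖b - p‖ * ‖p‖ + ‖p - b‖ := by
        gcongr <;> exact norm_mul_le _ _
    _ ≤ (1 + r) * r + r * 1 + r := by
        rw [norm_sub_rev p b, ← hr]; gcongr
    _ ≤ 4 * r := by nlinarith
  have hquasi : ∀ t ∈ quasispectrum ℝ b, |t * t - t| ≤ 4 * r := by
    intro t ht
    have hg0 : (fun t : ℝ => t * t - t) 0 = 0 := by norm_num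
    have key := norm_apply_le_norm_cfcₙ (fun t : ℝ => t * t - t) b ht
      (Continuous.continuousOn (by fun_prop)) hg0 hb
    have heq : cfcₙ (fun t : ℝ => t * t - t) b = b * b - b := by
      rw [cfcₙ_sub (fun t : ℝ => t * t) (fun t : ℝ => t) b]
      rw [cfcₙ_mul (fun t : ℝ => t) (fun t : ℝ => t) b, cfcₙ_id' ℝ b]
    rw [heq] at key
    exact le_trans key hc
  have hne : ∀ t ∈ quasispectrum ℝ b, t ≠ 1/2 := by
    intro t ht h
    have := hquasi t ht
    rw [h, show (1:ℝ)/2 * (1/2) - 1/2 = -(1/4) by norm_num, abs_neg,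
      abs_of_pos (by norm_num : (0:ℝ) < 1/4)] at this
    linarith
  set f : ℝ → ℝ := fun t => if t < 1/2 then 0 else 1 with hf
  have hf0 : f 0 = 0 := by norm_num [hf]
  have hfc : ContinuousOn f (quasispectrum ℝ b) := by
    intro t ht
    rcases lt_or_gt_of_ne (hne t ht) with h | h
    · have : f =ᶠ[nhds t] fun _ => (0 : ℝ) := by
        filter_upwards [Iio_mem_nhds h] with x hx
        simp only [hf]
        rw [if_pos (Set.mem_Iio.mp hx)]
      exact (continuousAt_const.congr this.symm).continuousWithinAt
    · have : f =ᶠ[nhds t] fun _ => (1 : ℝ) := by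
        filter_upwards [Ioi_mem_nhds h] with x hx
        simp only [hf]
        rw [if_neg (not_lt.mpr (le_of_lt (Set.mem_Ioi.mp hx)))]
      exact (continuousAt_const.congr this.symm).continuousWithinAt
  refine ⟨cfcₙ f b, cfcₙ_predicate f b, ?_, ?_, ?_⟩
  · rw [← cfcₙ_mul f f b]
    apply cfcₙ_congr
    intro t _
    show f t * f t = f t
    simp only [hf]
    split_ifs <;> norm_num
  · have hqb : cfcₙ (fun t => f t - t) b = cfcₙ f b - b := by
      rw [cfcₙ_sub f (fun t : ℝ => t) b, cfcₙ_id' ℝ b]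
    rw [← hqb]
    apply norm_cfcₙ_le
    intro t ht
    have h4 := hquasi t ht
    by_cases h : t < 1/2
    · have h1 : 1/2 ≤ |t - 1| := by
        rw [abs_sub_comm, abs_of_pos (by linarith)]; linarith
      have : |t| * |t - 1| ≤ 4 * r := by rw [← abs_mul]; rw [mul_sub, mul_one]; exact h4
      have h2 : |t| ≤ 8 * r := by nlinarith [abs_nonneg t, abs_nonneg (t-1)]
      have h3 : |f t - t| = |t| := by
        simp only [hf]
        rw [if_pos h, zero_sub, abs_neg]
      rw [Real.norm_eq_abs, h3]
      exact h2
    · push_neg at h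
      have h1 : 1/2 ≤ |t| := by rw [abs_of_pos (by linarith)]; linarith
      have : |t| * |t - 1| ≤ 4 * r := by rw [← abs_mul]; rw [mul_sub, mul_one]; exact h4
      have h2 : |t - 1| ≤ 8 * r := by nlinarith [abs_nonneg t, abs_nonneg (t-1)]
      have h3 : |f t - t| = |t - 1| := by
        simp only [hf]
        rw [if_neg (not_lt.mpr h), abs_sub_comm]
      rw [Real.norm_eq_abs, h3]; exact h2
  · intro S hS hbS
    exact cfcn_mem hb S hS hbS f hfc hf0

set_option maxHeartbeats 1000000 in
/-- Lemma: orthogonal projections almost contained in a C*-subalgebra can be replaced by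
orthogonal projections inside the subalgebra. -/
theorem stmt0 (ε : ℝ) (hε : 0 < ε) (n : ℕ) (hn : 0 < n) :
    ∃ δ > (0 : ℝ), ∀ (A : Type) (_ : CStarAlgebra A)
      (B : NonUnitalStarSubalgebra ℂ A), IsClosed (B : Set A) →
      ∀ (k : ℕ), k ≤ n →
      ∀ (p a : Fin n → A),
      (∀ i, IsSelfAdjoint (p i) ∧ p i * p i = p i) →
      (∀ i j, i ≠ j → p i * p j = 0) →
      (∀ i : Fin n, (i : ℕ) < k → p i ∈ B) →
      (∀ i : Fin n, k ≤ (i : ℕ) →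
        a i ∈ B ∧ IsSelfAdjoint (a i) ∧ ‖p i - a i‖ < min (1/2) δ) →
      ∃ q : Fin n → A,
        (∀ i, q i ∈ B ∧ IsSelfAdjoint (q i) ∧ q i * q i = q i) ∧
        (∀ i j, i ≠ j → q i * q j = 0) ∧
        (∀ i : Fin n, (i : ℕ) < k → q i = p i) ∧
        (∀ i : Fin n, k ≤ (i : ℕ) → ‖q i - p i‖ < ε) := by
  have hn1 : (1:ℝ) ≤ n := by exact_mod_cast hn
  set K : ℝ := 40 * n with hK
  have hK40 : (40:ℝ) ≤ K := by rw [hK]; nlinarith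
  have hK1 : (1:ℝ) ≤ K := by linarith
  have hK0 : (0:ℝ) < K := by linarith
  set δ : ℝ := min ε 1 / (100 * n * K ^ (n+1)) with hδ
  have hδ0 : 0 < δ := by
    apply div_pos (lt_min hε one_pos)
    positivity
  refine ⟨δ, hδ0, ?_⟩
  intro A instA B hB k hk p a hproj horth hpB ha
  have hKn1 : δ * K ^ (n+1) = min ε 1 / (100 * n) := by
    rw [hδ]
    field_simp
  have hmin1 : min ε 1 ≤ 1 := min_le_right _ _
  have hminε : min ε 1 ≤ ε := min_le_left _ _
  have hn0' : (0:ℝ) < n := by linarith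
  -- the inductive construction
  have main : ∀ m : ℕ, m ≤ n → ∃ q : Fin n → A,
      (∀ i : Fin n, (i : ℕ) < m → q i ∈ B ∧ IsSelfAdjoint (q i) ∧ q i * q i = q i) ∧
      (∀ i j : Fin n, (i : ℕ) < m → (j : ℕ) < m → i ≠ j → q i * q j = 0) ∧
      (∀ i : Fin n, (i : ℕ) < m → (i : ℕ) < k → q i = p i) ∧
      (∀ i : Fin n, (i : ℕ) < m → k ≤ (i : ℕ) → ‖q i - p i‖ ≤ δ * K ^ ((i : ℕ)+1)) := by
    intro m
    induction m with
    | zero => exact fun _ => ⟨fun _ => 0, by omega, by omega, by omega, by omega⟩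
    | succ m ih =>
      intro hm1
      obtain ⟨q, h1, h2, h3, h4⟩ := ih (by omega)
      set M : Fin n := ⟨m, by omega⟩ with hM
      have hMval : (M : ℕ) = m := rfl
      by_cases hmk : m < k
      · -- insert p M itself
        refine ⟨Function.update q M (p M), ?_, ?_, ?_, ?_⟩
        · intro i hi
          by_cases hiM : i = M
          · rw [hiM, Function.update_self]
            exact ⟨hpB M hmk, (hproj M).1, (hproj M).2⟩
          · have hi' : (i : ℕ) < m := by
              have : (i:ℕ) ≠ m := fun h => hiM (Fin.val_injective h)
              omega
            rw [Function.update_of_ne hiM]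
            exact h1 i hi'
        · intro i j hi hj hij
          by_cases hiM : i = M
          · have hjM : j ≠ M := fun h => hij (hiM.trans h.symm)
            have hj' : (j : ℕ) < m := by
              have : (j:ℕ) ≠ m := fun h => hjM (Fin.val_injective h)
              omega
            rw [hiM, Function.update_self, Function.update_of_ne hjM,
              h3 j hj' (by omega)]
            exact horth M j (fun h => hjM h.symm)
          · by_cases hjM : j = M
            · have hi' : (i : ℕ) < m := by
                have : (i:ℕ) ≠ m := fun h => hiM (Fin.val_injective h)
                omega
              rw [hjM, Function.update_self, Function.update_of_ne hiM,
                h3 i hi' (by omega)]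
              exact horth i M (fun h => hiM h)
            · have hi' : (i : ℕ) < m := by
                have : (i:ℕ) ≠ m := fun h => hiM (Fin.val_injective h)
                omega
              have hj' : (j : ℕ) < m := by
                have : (j:ℕ) ≠ m := fun h => hjM (Fin.val_injective h)
                omega
              rw [Function.update_of_ne hiM, Function.update_of_ne hjM]
              exact h2 i j hi' hj' hij
        · intro i hi hik
          by_cases hiM : i = M
          · rw [hiM, Function.update_self]
          · have hi' : (i : ℕ) < m := by
              have : (i:ℕ) ≠ m := fun h => hiM (Fin.val_injective h)
              omega
            rw [Function.update_of_ne hiM]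
            exact h3 i hi' hik
        · intro i hi hik
          have hiM : i ≠ M := by
            intro h
            subst h
            omega
          have hi' : (i : ℕ) < m := by
            have : (i:ℕ) ≠ m := fun h => hiM (Fin.val_injective h)
            omega
          rw [Function.update_of_ne hiM]
          exact h4 i hi' hik
      · -- the perturbation step
        push_neg at hmk
        obtain ⟨haB, ha_sa, ha_near⟩ := ha M (by simpa [hMval] using hmk)
        set Im : Finset (Fin n) := Finset.univ.filter (fun i : Fin n => (i : ℕ) < m) with hIm
        have hImmem : ∀ i : Fin n, i ∈ Im ↔ (i : ℕ) < m := by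
          intro i; simp [hIm]
        set e : A := ∑ i ∈ Im, q i with he
        have heB : e ∈ B := by
          apply sum_mem
          intro i hi
          exact (h1 i ((hImmem i).mp hi)).1
        have he_sa : IsSelfAdjoint e := by
          rw [IsSelfAdjoint, he, star_sum]
          exact Finset.sum_congr rfl fun i hi => ((h1 i ((hImmem i).mp hi)).2.1).star_eq
        have he2 : e * e = e := by
          rw [he, Finset.sum_mul_sum]
          refine Finset.sum_congr rfl fun i hi => ?_
          refine Finset.sum_eq_single i (fun j hj hji => h2 i j ((hImmem i).mp hi)
            ((hImmem j).mp hj) (fun h => hji h.symm)) (fun h => absurd hi h) |>.trans ?_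
          exact (h1 i ((hImmem i).mp hi)).2.2
        have hen : ‖e‖ ≤ 1 := proj_norm_le_one he_sa he2
        have heq : ∀ i : Fin n, (i : ℕ) < m → e * q i = q i ∧ q i * e = q i := by
          intro i hi
          constructor
          · rw [he, Finset.sum_mul]
            refine Finset.sum_eq_single i (fun j hj hji => h2 j i ((hImmem j).mp hj) hi hji)
              (fun h => absurd ((hImmem i).mpr hi) h) |>.trans ?_
            exact (h1 i hi).2.2
          · rw [he, Finset.mul_sum]
            refine Finset.sum_eq_single i (fun j hj hji => h2 i j hi ((hImmem j).mp hj)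
              (fun h => hji h.symm)) (fun h => absurd ((hImmem i).mpr hi) h) |>.trans ?_
            exact (h1 i hi).2.2
        have hpM : ‖p M‖ ≤ 1 := proj_norm_le_one (hproj M).1 (hproj M).2
        -- bound on ‖e * p M‖
        have hep : ‖e * p M‖ ≤ n * (δ * K ^ m) := by
          have hterm : ∀ i ∈ Im, ‖q i * p M‖ ≤ δ * K ^ m := by
            intro i hi
            have him : (i : ℕ) < m := (hImmem i).mp hi
            have hiM : i ≠ M := fun h => by
              rw [h, hMval] at him; omega
            by_cases hik : (i : ℕ) < k
            · rw [h3 i him hik, horth i M hiM, norm_zero]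
              positivity
            · push_neg at hik
              have : q i * p M = (q i - p i) * p M := by
                rw [sub_mul, horth i M hiM, sub_zero]
              rw [this]
              calc ‖(q i - p i) * p M‖ ≤ ‖q i - p i‖ * ‖p M‖ := norm_mul_le _ _
              _ ≤ (δ * K ^ ((i:ℕ)+1)) * 1 := by
                  gcongr
                  exact h4 i him hik
              _ ≤ δ * K ^ m := by
                  rw [mul_one]
                  exact mul_le_mul_of_nonneg_left (pow_le_pow_right₀ hK1 (by omega))
                    (le_of_lt hδ0)
          calc ‖e * p M‖ = ‖∑ i ∈ Im, q i * p M‖ := by rw [he, Finset.sum_mul]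
          _ ≤ ∑ i ∈ Im, ‖q i * p M‖ := norm_sum_le _ _
          _ ≤ ∑ _i ∈ Im, (δ * K ^ m) := Finset.sum_le_sum hterm
          _ = Im.card * (δ * K ^ m) := by rw [Finset.sum_const, nsmul_eq_mul]
          _ ≤ n * (δ * K ^ m) := by
              have hcard : (Im.card : ℝ) ≤ (n : ℝ) := by
                have : Im.card ≤ n := le_trans (Finset.card_filter_le _ _) (by simp)
                exact_mod_cast this
              exact mul_le_mul_of_nonneg_right hcard (by positivity)
        have hpe : ‖p M * e‖ = ‖e * p M‖ := by
          rw [← norm_star (e * p M), star_mul, he_sa.star_eq, (hproj M).1.star_eq]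
        -- the element b
        set b : A := a M - e * a M - a M * e + e * (a M * e) with hb
        have hbB : b ∈ B := by
          rw [hb]
          exact add_mem (sub_mem (sub_mem haB (mul_mem heB haB)) (mul_mem haB heB))
            (mul_mem heB (mul_mem haB heB))
        have hb_sa : IsSelfAdjoint b := by
          rw [IsSelfAdjoint, hb]
          simp only [star_add, star_sub, star_mul, he_sa.star_eq, ha_sa.star_eq]
          noncomm_ring
        have haM_near : ‖a M - p M‖ ≤ δ := by
          rw [norm_sub_rev]
          exact le_of_lt (lt_of_lt_of_le ha_near (min_le_right _ _))
        have h1me : ‖(1 : A) - e‖ ≤ 1 := by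
          apply proj_norm_le_one
          · exact (IsSelfAdjoint.one (R := A)).sub he_sa
          · rw [sub_mul, mul_sub, mul_sub, one_mul, mul_one, he2]
            noncomm_ring
        -- the key norm bound
        have hbp : ‖b - p M‖ ≤ 4 * n * (δ * K ^ m) := by
          have hid : b - p M = (1 - e) * ((a M - p M) * (1 - e))
              + (e * (p M * e) - e * p M - p M * e) := by
            rw [hb]
            noncomm_ring
          have h_1 : ‖(1 - e) * ((a M - p M) * (1 - e))‖ ≤ δ := by
            calc ‖(1 - e) * ((a M - p M) * (1 - e))‖
                ≤ ‖(1:A) - e‖ * (‖a M - p M‖ * ‖(1:A) - e‖) :=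
                  (norm_mul_le _ _).trans (by gcongr; exact norm_mul_le _ _)
            _ ≤ 1 * (δ * 1) := by gcongr
            _ = δ := by ring
          have h_2 : ‖e * (p M * e) - e * p M - p M * e‖ ≤ 3 * (n * (δ * K ^ m)) := by
            have hepe : ‖e * (p M * e)‖ ≤ n * (δ * K ^ m) := by
              calc ‖e * (p M * e)‖ ≤ ‖e‖ * ‖p M * e‖ := norm_mul_le _ _
              _ ≤ 1 * ‖e * p M‖ := by rw [hpe]; gcongr
              _ ≤ n * (δ * K ^ m) := by rw [one_mul]; exact hep
            calc ‖e * (p M * e) - e * p M - p M * e‖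
                ≤ ‖e * (p M * e) - e * p M‖ + ‖p M * e‖ := norm_sub_le _ _
            _ ≤ ‖e * (p M * e)‖ + ‖e * p M‖ + ‖p M * e‖ := by
                gcongr
                exact norm_sub_le _ _
            _ ≤ n * (δ * K ^ m) + n * (δ * K ^ m) + n * (δ * K ^ m) := by
                rw [hpe]
                gcongr
            _ = 3 * (n * (δ * K ^ m)) := by ring
          have h1Km : (1:ℝ) ≤ K ^ m := one_le_pow₀ hK1
          have h1nk : (1:ℝ) ≤ n * K ^ m := by nlinarith
          have hδnK : δ ≤ n * (δ * K ^ m) := by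
            calc δ = δ * 1 := (mul_one δ).symm
            _ ≤ δ * (n * K ^ m) := mul_le_mul_of_nonneg_left h1nk hδ0.le
            _ = n * (δ * K ^ m) := by ring
          calc ‖b - p M‖ ≤ ‖(1 - e) * ((a M - p M) * (1 - e))‖
              + ‖e * (p M * e) - e * p M - p M * e‖ := by rw [hid]; exact norm_add_le _ _
          _ ≤ δ + 3 * (n * (δ * K ^ m)) := by gcongr
          _ ≤ n * (δ * K ^ m) + 3 * (n * (δ * K ^ m)) := by gcongr
          _ = 4 * n * (δ * K ^ m) := by ring
        -- smallness
        have hKmono : δ * K ^ (m+1) ≤ δ * K ^ (n+1) :=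
          mul_le_mul_of_nonneg_left (pow_le_pow_right₀ hK1 (by omega)) hδ0.le
        have hsmall : ‖b - p M‖ < 1/16 := by
          have e1 : 4 * (n:ℝ) * (δ * K ^ m) = δ * K ^ (m+1) / 10 := by
            rw [pow_succ, hK]; ring
          have e3 : δ * K ^ (n+1) ≤ 1/100 := by
            rw [hKn1, div_le_div_iff₀ (by positivity) (by norm_num)]
            nlinarith
          calc ‖b - p M‖ ≤ 4 * n * (δ * K ^ m) := hbp
          _ = δ * K ^ (m+1) / 10 := e1
          _ ≤ (1/100) / 10 := by linarith
          _ < 1/16 := by norm_num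
        obtain ⟨q', hq'sa, hq'2, hq'near, hq'mem⟩ :=
          step_lemma hb_sa (hproj M).1 (hproj M).2 hsmall
        have hq'B : q' ∈ B := hq'mem B hB hbB
        have hq'ann : ∀ i : Fin n, (i : ℕ) < m → q' * q i = 0 ∧ q i * q' = 0 := by
          intro i hi
          have hqie := heq i hi
          have hbqi : b * q i = 0 := by
            have hexp : b * q i = a M * q i - e * (a M * q i) - a M * (e * q i)
                + e * (a M * (e * q i)) := by rw [hb]; noncomm_ring
            rw [hexp, hqie.1]
            noncomm_ring
          have hqib : q i * b = 0 := by
            have hexp : q i * b = q i * a M - (q i * e) * a M - q i * (a M * e)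
                + (q i * e) * (a M * e) := by rw [hb]; noncomm_ring
            rw [hexp, hqie.2]
            noncomm_ring
          exact hq'mem (ann (q i) (h1 i hi).2.1) (ann_isClosed _ _) ⟨hbqi, hqib⟩
        have hq'p : ‖q' - p M‖ ≤ δ * K ^ (m+1) := by
          have h9 : 9 * (4 * (n:ℝ) * (δ * K ^ m)) ≤ δ * K ^ (m+1) := by
            have hKK : δ * K ^ (m+1) = 40 * n * (δ * K ^ m) := by
              rw [pow_succ, hK]; ring
            rw [hKK]
            nlinarith [mul_nonneg (mul_nonneg hn0'.le hδ0.le) (pow_nonneg hK0.le m)]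
          calc ‖q' - p M‖ = ‖(q' - b) + (b - p M)‖ := by rw [sub_add_sub_cancel]
          _ ≤ ‖q' - b‖ + ‖b - p M‖ := norm_add_le _ _
          _ ≤ 8 * ‖b - p M‖ + ‖b - p M‖ := by gcongr
          _ = 9 * ‖b - p M‖ := by ring
          _ ≤ 9 * (4 * n * (δ * K ^ m)) := by gcongr
          _ ≤ δ * K ^ (m+1) := h9
        refine ⟨Function.update q M q', ?_, ?_, ?_, ?_⟩
        · intro i hi
          by_cases hiM : i = M
          · rw [hiM, Function.update_self]
            exact ⟨hq'B, hq'sa, hq'2⟩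
          · have hi' : (i : ℕ) < m := by
              have : (i:ℕ) ≠ m := fun h => hiM (Fin.val_injective h)
              omega
            rw [Function.update_of_ne hiM]
            exact h1 i hi'
        · intro i j hi hj hij
          by_cases hiM : i = M
          · have hjM : j ≠ M := fun h => hij (hiM.trans h.symm)
            have hj' : (j : ℕ) < m := by
              have : (j:ℕ) ≠ m := fun h => hjM (Fin.val_injective h)
              omega
            rw [hiM, Function.update_self, Function.update_of_ne hjM]
            exact (hq'ann j hj').1
          · by_cases hjM : j = M
            · have hi' : (i : ℕ) < m := by
                have : (i:ℕ) ≠ m := fun h => hiM (Fin.val_injective h)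
                omega
              rw [hjM, Function.update_self, Function.update_of_ne hiM]
              exact (hq'ann i hi').2
            · have hi' : (i : ℕ) < m := by
                have : (i:ℕ) ≠ m := fun h => hiM (Fin.val_injective h)
                omega
              have hj' : (j : ℕ) < m := by
                have : (j:ℕ) ≠ m := fun h => hjM (Fin.val_injective h)
                omega
              rw [Function.update_of_ne hiM, Function.update_of_ne hjM]
              exact h2 i j hi' hj' hij
        · intro i hi hik
          have hiM : i ≠ M := by
            intro h
            rw [h, hMval] at hik
            omega
          have hi' : (i : ℕ) < m := by
            have : (i:ℕ) ≠ m := fun h => hiM (Fin.val_injective h)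
            omega
          rw [Function.update_of_ne hiM]
          exact h3 i hi' hik
        · intro i hi hik
          by_cases hiM : i = M
          · rw [hiM, Function.update_self]
            have : ((M : ℕ) + 1) = m + 1 := by rw [hMval]
            rw [this]
            exact hq'p
          · have hi' : (i : ℕ) < m := by
              have : (i:ℕ) ≠ m := fun h => hiM (Fin.val_injective h)
              omega
            rw [Function.update_of_ne hiM]
            exact h4 i hi' hik
  obtain ⟨q, h1, h2, h3, h4⟩ := main n le_rfl
  refine ⟨q, fun i => h1 i i.isLt, fun i j hij => h2 i j i.isLt j.isLt hij,
    fun i hik => h3 i i.isLt hik, fun i hik => ?_⟩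
  have hle : δ * K ^ ((i:ℕ)+1) ≤ δ * K ^ (n+1) :=
    mul_le_mul_of_nonneg_left (pow_le_pow_right₀ hK1 (by omega)) hδ0.le
  have hfin : δ * K ^ (n+1) < ε := by
    rw [hKn1, div_lt_iff₀ (by positivity)]
    nlinarith
  calc ‖q i - p i‖ ≤ δ * K ^ ((i:ℕ)+1) := h4 i i.isLt hik
  _ ≤ δ * K ^ (n+1) := hle
  _ < ε := hfin
end

section
/- Let A be a C*-algebra, and let e ∈ A be positive and x_n ∈ A a sequence with x_n e x_n* → p for a projection p. Then the elements a_n = e^{1/2} x_n* x_n e^{1/2} are self-adjoint and satisfy ‖a_n − a_n²‖ → 0. -/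
open Filter Topology

/-- If x_n e x_n* → p for a projection p, then a_n = e^{1/2} x_n* x_n e^{1/2} are
self-adjoint and ‖a_n - a_n²‖ → 0.  Here s = e^{1/2} is the positive square root of e. -/
theorem stmt2 {A : Type*} [CStarAlgebra A] [PartialOrder A] [StarOrderedRing A]
    (e s p : A) (he : 0 ≤ e) (hs : 0 ≤ s) (hse : s * s = e)
    (hp : IsSelfAdjoint p) (hp2 : p * p = p) (x : ℕ → A)
    (hconv : Tendsto (fun n => x n * e * star (x n)) atTop (𝓝 p)) :
    (∀ n, IsSelfAdjoint (s * (star (x n) * x n) * s)) ∧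
    Tendsto (fun n => ‖s * (star (x n) * x n) * s -
      (s * (star (x n) * x n) * s) * (s * (star (x n) * x n) * s)‖) atTop (𝓝 (0 : ℝ)) := by
  have hss : star s = s := (IsSelfAdjoint.of_nonneg hs).star_eq
  have hsa : ∀ n, IsSelfAdjoint (s * (star (x n) * x n) * s) := by
    intro n
    show star _ = _
    simp [star_mul, hss, mul_assoc]
  refine ⟨hsa, ?_⟩
  set c : ℕ → A := fun n => x n * s with hc
  set b : ℕ → A := fun n => c n * star (c n) with hb
  have hbconv : Tendsto b atTop (𝓝 p) := by
    have : b = fun n => x n * e * star (x n) := by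
      funext n
      simp [hb, hc, star_mul, hss, ← hse, mul_assoc]
    rw [this]; exact hconv
  set d : ℕ → A := fun n => (b n - b n * b n) - (b n - b n * b n) * b n with hd
  have hdconv : Tendsto d atTop (𝓝 0) := by
    have h1 : Tendsto (fun n => b n - b n * b n) atTop (𝓝 (p - p * p)) :=
      hbconv.sub (hbconv.mul hbconv)
    have h2 : Tendsto d atTop (𝓝 ((p - p * p) - (p - p * p) * p)) :=
      h1.sub (h1.mul hbconv)
    simpa [hp2] using h2
  set a : ℕ → A := fun n => s * (star (x n) * x n) * s with ha
  have hac : ∀ n, a n = star (c n) * c n := by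
    intro n
    simp [ha, hc, star_mul, hss, mul_assoc]
  set f : ℕ → A := fun n => a n - a n * a n with hf
  have hfsa : ∀ n, IsSelfAdjoint (f n) := by
    intro n
    have : IsSelfAdjoint (a n * a n) := by
      show star _ = _
      rw [star_mul, (hsa n).star_eq]
    exact (hsa n).sub this
  have key : ∀ n, f n * f n = star (c n) * d n * c n := by
    intro n
    simp only [hf, hac, hd, hb]
    noncomm_ring
  have hnorm : ∀ n, ‖f n‖ * ‖f n‖ ≤ ‖b n‖ * ‖d n‖ := by
    intro n
    calc ‖f n‖ * ‖f n‖ = ‖star (f n) * f n‖ := (CStarRing.norm_star_mul_self).symm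
      _ = ‖f n * f n‖ := by rw [(hfsa n).star_eq]
      _ = ‖star (c n) * d n * c n‖ := by rw [key n]
      _ ≤ ‖star (c n) * d n‖ * ‖c n‖ := norm_mul_le _ _
      _ ≤ (‖star (c n)‖ * ‖d n‖) * ‖c n‖ := by
          exact mul_le_mul_of_nonneg_right (norm_mul_le _ _) (norm_nonneg _)
      _ = (‖c n‖ * ‖c n‖) * ‖d n‖ := by rw [norm_star]; ring
      _ = ‖b n‖ * ‖d n‖ := by rw [hb]; rw [CStarRing.norm_self_mul_star]
  have hsq : Tendsto (fun n => ‖f n‖ * ‖f n‖) atTop (𝓝 0) := by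
    have hub : Tendsto (fun n => ‖b n‖ * ‖d n‖) atTop (𝓝 0) := by
      have := hbconv.norm.mul hdconv.norm
      simpa using this
    exact squeeze_zero (fun n => mul_nonneg (norm_nonneg _) (norm_nonneg _)) hnorm hub
  have := hsq.sqrt
  simp only [Real.sqrt_zero] at this
  have heq : (fun n => Real.sqrt (‖f n‖ * ‖f n‖)) = fun n => ‖f n‖ := by
    funext n; exact Real.sqrt_mul_self (norm_nonneg _)
  rw [heq] at this
  exact this
end
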